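/- A central slice of the cube C_d having the largest possible number of vertices among all central slices of C_d is a generic central slice, i.e., its defining hyperplane contains no vertex of C_d. -/

import Mathlib

open scoped RealInnerProductSpace

noncomputable section

/-- The `d`-dimensional cube `C_d = [-1,1]^d`. -/
def cube (d : ℕ) : Set (EuclideanSpace ℝ (Fin d)) := {x | ∀ i, |x i| ≤ 1}

/-- The vertex set `{-1,1}^d` of the cube `C_d`. -/
def cubeVertices (d : ℕ) : Set (EuclideanSpace ℝ (Fin d)) := {x | ∀ i, x i = 1 ∨ x i = -1}

/-- The (affine) dimension of a subset of Euclidean space: the dimension of the direction of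
its affine span. -/
def adim {d : ℕ} (S : Set (EuclideanSpace ℝ (Fin d))) : ℕ :=
  Module.finrank ℝ (affineSpan ℝ S).direction

/-- Two sets (e.g. polytopes) are combinatorially equivalent if their posets of exposed faces
(i.e., their face lattices), ordered by inclusion, are order-isomorphic. -/
def CombEquiv {d e : ℕ} (P : Set (EuclideanSpace ℝ (Fin d)))
    (Q : Set (EuclideanSpace ℝ (Fin e))) : Prop :=
  Nonempty ({F : Set (EuclideanSpace ℝ (Fin d)) // IsExposed ℝ P F} ≃o
            {G : Set (EuclideanSpace ℝ (Fin e)) // IsExposed ℝ Q G})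

theorem inner_sum' {d : ℕ} (u x : EuclideanSpace ℝ (Fin d)) : ⟪u, x⟫ = ∑ i, u i * x i := by
  simp [PiLp.inner_apply, RCLike.inner_apply, mul_comm]

theorem abs_apply_le_norm {d : ℕ} (x : EuclideanSpace ℝ (Fin d)) (i : Fin d) : |x i| ≤ ‖x‖ :=
  calc |x i| ≤ Real.sqrt (∑ j, ‖x j‖^2) := by
        rw [show |x i| = Real.sqrt (‖x i‖^2) by simp [Real.sqrt_sq_eq_abs]]
        apply Real.sqrt_le_sqrt
        exact Finset.single_le_sum (f := fun j => ‖x j‖^2) (fun j _ => by positivity) (Finset.mem_univ i)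
    _ = ‖x‖ := (EuclideanSpace.norm_eq x).symm

theorem adim_slice (d : ℕ) (u : EuclideanSpace ℝ (Fin d)) (hu : u ≠ 0) :
    adim (cube d ∩ {x | ⟪u, x⟫ = 0}) = d - 1 := by
  set S := cube d ∩ {x | ⟪u, x⟫ = 0} with hS
  have h0 : (0 : EuclideanSpace ℝ (Fin d)) ∈ S := by
    constructor
    · intro i; simp [cube]
    · simp
  have hsub : S ⊆ ((ℝ ∙ u)ᗮ : Submodule ℝ (EuclideanSpace ℝ (Fin d))) := by
    intro x hx
    exact Submodule.mem_orthogonal_singleton_iff_inner_right.mpr hx.2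
  have hdir : (affineSpan ℝ S).direction = Submodule.span ℝ S := by
    rw [direction_affineSpan]
    apply le_antisymm
    · rw [vectorSpan_def, Submodule.span_le]
      rintro v ⟨a, ha, b, hb, rfl⟩
      exact Submodule.sub_mem _ (Submodule.subset_span ha) (Submodule.subset_span hb)
    · rw [Submodule.span_le]
      intro x hx
      have : x - 0 ∈ vectorSpan ℝ S := vsub_mem_vectorSpan ℝ hx h0
      simpa using this
  have hspan : Submodule.span ℝ S = ((ℝ ∙ u)ᗮ : Submodule ℝ (EuclideanSpace ℝ (Fin d))) := by
    apply le_antisymm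
    · rw [Submodule.span_le]; exact hsub
    · intro y hy
      have hn : (0:ℝ) < 1 + ‖y‖ := by positivity
      have hmem : (1 + ‖y‖)⁻¹ • y ∈ S := by
        constructor
        · intro i
          have h1 : |y i| ≤ ‖y‖ := abs_apply_le_norm y i
          have h2 : |((1 + ‖y‖)⁻¹ • y) i| = (1 + ‖y‖)⁻¹ * |y i| := by
            simp [abs_mul, abs_of_pos (inv_pos.mpr hn)]
          rw [h2]
          rw [inv_mul_le_iff₀ hn, mul_one]
          linarith
        · show ⟪u, _⟫ = 0
          rw [inner_smul_right]
          have : ⟪u, y⟫ = 0 := Submodule.mem_orthogonal_singleton_iff_inner_right.mp hy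
          simp [this]
      have : y = (1 + ‖y‖) • ((1 + ‖y‖)⁻¹ • y) := by
        rw [smul_smul, mul_inv_cancel₀ (ne_of_gt hn), one_smul]
      rw [this]
      exact Submodule.smul_mem _ _ (Submodule.subset_span hmem)
  rw [adim, hdir, hspan]
  have h1 : Module.finrank ℝ (ℝ ∙ u) = 1 := finrank_span_singleton hu
  have h2 := Submodule.finrank_add_finrank_orthogonal (K := (ℝ ∙ u : Submodule ℝ (EuclideanSpace ℝ (Fin d))))
  have h3 : Module.finrank ℝ (EuclideanSpace ℝ (Fin d)) = d := finrank_euclideanSpace_fin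
  omega

theorem seg_eq (p q a b c : ℝ) (hp : |p| ≤ 1) (hq : |q| ≤ 1) (ha : 0 < a) (hb : 0 < b)
    (hab : a + b = 1) (hc : a*p + b*q = c) (h1 : c = 1 ∨ c = -1) : p = c ∧ q = c := by
  rcases h1 with rfl | rfl <;> rw [abs_le] at hp hq <;> constructor <;> nlinarith

theorem coord_determined {d : ℕ} (u x y : EuclideanSpace ℝ (Fin d)) (i : Fin d)
    (hui : u i ≠ 0) (hx : ⟪u,x⟫ = 0) (hy : ⟪u,y⟫ = 0)
    (hoff : ∀ j, j ≠ i → x j = y j) : x = y := by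
  have hsum : ∑ j, u j * (x j - y j) = 0 := by
    have := inner_sum' u x ▸ hx
    have h2 := inner_sum' u y ▸ hy
    simp only [mul_sub, Finset.sum_sub_distrib]
    rw [this, h2]; ring
  rw [Finset.sum_eq_single i] at hsum
  · have : x i = y i := by
      rcases mul_eq_zero.mp hsum with h | h
      · exact absurd h hui
      · linarith [sub_eq_zero.mp h]
    ext j
    by_cases hj : j = i
    · rw [hj]; exact this
    · exact hoff j hj
  · intro j _ hj
    rw [hoff j hj]; ring
  · intro h; exact absurd (Finset.mem_univ i) h

theorem extreme_of_one_free {d : ℕ} (u x : EuclideanSpace ℝ (Fin d))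
    (hx : x ∈ cube d) (hH : ⟪u,x⟫ = 0) (i0 : Fin d)
    (hother : ∀ j, j ≠ i0 → x j = 1 ∨ x j = -1) (hui : u i0 ≠ 0) :
    x ∈ Set.extremePoints ℝ (cube d ∩ {y | ⟪u,y⟫ = 0}) := by
  refine ⟨⟨hx, hH⟩, ?_⟩
  rintro x₁ ⟨h₁c, h₁H⟩ x₂ ⟨h₂c, h₂H⟩ ⟨a, b, ha, hb, hab, hsum⟩
  have hco : ∀ j, a * x₁ j + b * x₂ j = x j := by
    intro j
    have := congrFun (congrArg (fun (z : EuclideanSpace ℝ (Fin d)) => (z : Fin d → ℝ)) hsum) j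
    simpa [smul_eq_mul] using this
  have hoff1 : ∀ j, j ≠ i0 → x₁ j = x j := by
    intro j hj
    exact (seg_eq (x₁ j) (x₂ j) a b (x j) (h₁c j) (h₂c j) ha hb hab (hco j) (hother j hj)).1
  have hoff2 : ∀ j, j ≠ i0 → x₂ j = x j := by
    intro j hj
    exact (seg_eq (x₁ j) (x₂ j) a b (x j) (h₁c j) (h₂c j) ha hb hab (hco j) (hother j hj)).2
  exact coord_determined u x₁ x i0 hui h₁H hH hoff1

theorem no_free_direction {d : ℕ} (u x : EuclideanSpace ℝ (Fin d))
    (hx : x ∈ Set.extremePoints ℝ (cube d ∩ {y | ⟪u,y⟫ = 0}))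
    (v : EuclideanSpace ℝ (Fin d)) (hsupp : ∀ i, |x i| = 1 → v i = 0)
    (hvH : ⟪u,v⟫ = 0) : v = 0 := by
  obtain ⟨⟨hcube, hH⟩, hext⟩ := hx
  by_contra hv0
  obtain ⟨i0, hi0⟩ : ∃ i, v i ≠ 0 := by
    by_contra hc; push_neg at hc
    exact hv0 (by ext i; simpa using hc i)
  -- choose t > 0 with |x i| + t * |v i| ≤ 1 for all i
  set M := ‖v‖ with hM
  have hMpos : 0 < 1 + M := by positivity
  have hfree : ∀ i, v i ≠ 0 → |x i| < 1 := by
    intro i hvi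
    rcases lt_or_eq_of_le (hcube i) with h | h
    · exact h
    · exact absurd (hsupp i h) hvi
  set δ : ℝ := Finset.univ.inf' ⟨i0, Finset.mem_univ i0⟩
      (fun i => if v i = 0 then 1 else 1 - |x i|) with hδ
  have hδpos : 0 < δ := by
    rw [hδ]
    apply Finset.lt_inf'_iff .. |>.mpr
    intro i _
    by_cases h : v i = 0
    · simp [h]
    · simp only [h, if_false]
      linarith [hfree i h]
  set t : ℝ := δ / (1 + M) with ht
  have htpos : 0 < t := div_pos hδpos hMpos
  have hbound : ∀ i (s : ℝ), s = 1 ∨ s = -1 → |x i + s * (t * v i)| ≤ 1 := by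
    intro i s hs
    by_cases h : v i = 0
    · simp [h, hcube i]
    · have h1 : |x i + s * (t * v i)| ≤ |x i| + t * |v i| := by
        calc |x i + s * (t * v i)| ≤ |x i| + |s * (t * v i)| := abs_add_le _ _
          _ = |x i| + t * |v i| := by
              rcases hs with rfl | rfl <;>
                simp [abs_mul, abs_of_pos htpos]
      have h2 : δ ≤ 1 - |x i| := by
        rw [hδ]
        refine le_trans (Finset.inf'_le _ (Finset.mem_univ i)) ?_
        simp [h]
      have h3 : |v i| ≤ M := abs_apply_le_norm v i
      have h4 : t * |v i| ≤ δ := by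
        rw [ht, div_mul_eq_mul_div, div_le_iff₀ hMpos]
        have : |v i| ≤ 1 + M := by linarith
        nlinarith [abs_nonneg (v i), hδpos]
      linarith
  have hmem : ∀ (s : ℝ), s = 1 ∨ s = -1 → x + s • (t • v) ∈ cube d ∩ {y | ⟪u,y⟫ = 0} := by
    intro s hs
    constructor
    · intro i
      have : (x + s • (t • v)) i = x i + s * (t * v i) := by
        simp [smul_eq_mul, mul_assoc]
      rw [this]
      exact hbound i s hs
    · show ⟪u, _⟫ = 0
      rw [inner_add_right, inner_smul_right, inner_smul_right, hH, hvH]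
      ring
  have hseg : x ∈ openSegment ℝ (x + (1:ℝ) • (t • v)) (x + (-1:ℝ) • (t • v)) := by
    refine ⟨1/2, 1/2, by norm_num, by norm_num, by norm_num, ?_⟩
    module
  have := hext (hmem 1 (Or.inl rfl)) (hmem (-1) (Or.inr rfl)) hseg
  have h5 : x + (1:ℝ) • (t • v) = x := this
  have h6 : t • v = 0 := by
    have := sub_eq_zero.mpr h5
    simpa using this
  rcases smul_eq_zero.mp h6 with h | h
  · exact absurd h (ne_of_gt htpos)
  · exact hv0 h

theorem structure_of_extreme {d : ℕ} (u x : EuclideanSpace ℝ (Fin d))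
    (hx : x ∈ Set.extremePoints ℝ (cube d ∩ {y | ⟪u,y⟫ = 0})) :
    (∀ i, x i = 1 ∨ x i = -1) ∨
    (∃ i, u i ≠ 0 ∧ |x i| < 1 ∧ ∀ j, j ≠ i → x j = 1 ∨ x j = -1) := by
  have hcube : ∀ i, |x i| ≤ 1 := hx.1.1
  by_cases hex : ∃ i, |x i| < 1
  · obtain ⟨i, hi⟩ := hex
    right
    have hui : u i ≠ 0 := by
      intro hu0
      have := no_free_direction u x hx (EuclideanSpace.single i 1)
        (fun j hj => by
          by_cases h : j = i
          · subst h; exact absurd hj (ne_of_lt hi)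
          · simp [EuclideanSpace.single_apply, h])
        (by rw [inner_sum']
            rw [Finset.sum_eq_single i]
            · simp [EuclideanSpace.single_apply, hu0]
            · intro j _ hj; simp [EuclideanSpace.single_apply, hj]
            · intro h; exact absurd (Finset.mem_univ i) h)
      have := congrFun (congrArg (fun (z : EuclideanSpace ℝ (Fin d)) => (z : Fin d → ℝ)) this) i
      simp [EuclideanSpace.single_apply] at this
    refine ⟨i, hui, hi, ?_⟩
    intro j hj
    rcases lt_or_eq_of_le (hcube j) with h | h
    · -- two free coordinates: contradiction
      exfalso
      set v : EuclideanSpace ℝ (Fin d) :=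
        (u j) • EuclideanSpace.single i (1:ℝ) - (u i) • EuclideanSpace.single j 1 with hv
      have hvj : v j = -(u i) := by
        simp [hv, EuclideanSpace.single_apply, hj, Ne.symm hj]
      have := no_free_direction u x hx v
        (fun k hk => by
          have hki : k ≠ i := by rintro rfl; exact absurd hk (ne_of_lt hi)
          have hkj : k ≠ j := by rintro rfl; exact absurd hk (ne_of_lt h)
          simp [hv, EuclideanSpace.single_apply, Ne.symm hki, Ne.symm hkj, hki, hkj])
        (by rw [inner_sub_right, inner_smul_right, inner_smul_right]
            rw [inner_sum', inner_sum']
            rw [Finset.sum_eq_single i, Finset.sum_eq_single j]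
            · simp [EuclideanSpace.single_apply]; ring
            · intro k _ hk; simp [EuclideanSpace.single_apply, hk]
            · intro hc; exact absurd (Finset.mem_univ j) hc
            · intro k _ hk; simp [EuclideanSpace.single_apply, hk]
            · intro hc; exact absurd (Finset.mem_univ i) hc)
      rw [this] at hvj
      simp at hvj
      exact hui hvj
    · rcases abs_eq (by norm_num : (0:ℝ) ≤ 1) |>.mp h with h' | h'
      · exact Or.inl h'
      · exact Or.inr h'
  · left
    push_neg at hex
    intro i
    have h : |x i| = 1 := le_antisymm (hcube i) (hex i)
    rcases abs_eq (by norm_num : (0:ℝ) ≤ 1) |>.mp h with h' | h'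
    · exact Or.inl h'
    · exact Or.inr h'

theorem extremePoints_finite {d : ℕ} (u : EuclideanSpace ℝ (Fin d)) :
    (Set.extremePoints ℝ (cube d ∩ {y | ⟪u,y⟫ = 0})).Finite := by
  classical
  set S := Set.extremePoints ℝ (cube d ∩ {y | ⟪u,y⟫ = 0}) with hS
  set f : EuclideanSpace ℝ (Fin d) → Option (Fin d) × (Fin d → Prop) :=
    fun x => (if h : ∃ i, |x i| < 1 then some h.choose else none, fun j => x j = 1) with hf
  have hinj : Set.InjOn f S := by
    intro x hx y hy hxy
    have hx' := structure_of_extreme u x hx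
    have hy' := structure_of_extreme u y hy
    have h1 : (f x).1 = (f y).1 := by rw [hxy]
    have h2 : ∀ j, (x j = 1) ↔ (y j = 1) := by
      intro j
      have := congrFun (congrArg Prod.snd hxy) j
      simp only [hf] at this
      exact Eq.to_iff this
    have hpm : ∀ (a b : ℝ), (a = 1 ∨ a = -1) → (b = 1 ∨ b = -1) → ((a = 1) ↔ (b = 1)) → a = b := by
      rintro a b (rfl|rfl) (rfl|rfl) hiff <;> first | rfl | (exfalso; revert hiff; norm_num)
    rcases hx' with hxa | ⟨i, hui, hilt, hirest⟩
    · rcases hy' with hya | ⟨i, hui, hilt, hirest⟩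
      · ext j
        exact hpm _ _ (hxa j) (hya j) (h2 j)
      · exfalso
        have hfx : (f x).1 = none := by
          simp only [hf]
          rw [dif_neg]
          rintro ⟨k, hk⟩
          rcases hxa k with h | h <;> rw [h] at hk <;> simp at hk
        have hfy : (f y).1 ≠ none := by
          simp only [hf]
          rw [dif_pos ⟨i, hilt⟩]
          simp
        rw [← h1, hfx] at hfy
        exact hfy rfl
    · rcases hy' with hya | ⟨i', hui', hilt', hirest'⟩
      · exfalso
        have hfy : (f y).1 = none := by
          simp only [hf]
          rw [dif_neg]
          rintro ⟨k, hk⟩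
          rcases hya k with h | h <;> rw [h] at hk <;> simp at hk
        have hfx : (f x).1 ≠ none := by
          simp only [hf]
          rw [dif_pos ⟨i, hilt⟩]
          simp
        rw [h1, hfy] at hfx
        exact hfx rfl
      · -- both have a free coordinate; chosen indices agree
        have hchx : (f x).1 = some i := by
          simp only [hf]
          rw [dif_pos ⟨i, hilt⟩]
          congr 1
          · -- choose is i since any free index must be i
            have h := (⟨i, hilt⟩ : ∃ k, |x k| < 1).choose_spec
            by_contra hne
            rcases hirest _ (hne) with h' | h' <;> rw [h'] at h <;> simp at h
        have hchy : (f y).1 = some i' := by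
          simp only [hf]
          rw [dif_pos ⟨i', hilt'⟩]
          congr 1
          · have h := (⟨i', hilt'⟩ : ∃ k, |y k| < 1).choose_spec
            by_contra hne
            rcases hirest' _ (hne) with h' | h' <;> rw [h'] at h <;> simp at h
        have hii : i = i' := by
          have := hchx ▸ hchy ▸ h1
          exact Option.some.inj this
        subst hii
        refine coord_determined u x y i hui hx.1.2 hy.1.2 ?_
        intro j hj
        exact hpm _ _ (hirest j hj) (hirest' j hj) (h2 j)
  have : Finite (Option (Fin d) × (Fin d → Prop)) := by infer_instance
  exact Set.Finite.of_finite_image (Set.toFinite (f '' S)) hinj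

def edgeVal {d : ℕ} (w x : EuclideanSpace ℝ (Fin d)) (i : Fin d) : ℝ :=
  -(∑ j ∈ Finset.univ.erase i, w j * x j) / (w i)

def edgePoint {d : ℕ} (w x : EuclideanSpace ℝ (Fin d)) (i : Fin d) : EuclideanSpace ℝ (Fin d) :=
  WithLp.toLp 2 (Function.update x i (edgeVal w x i))

def w3 (d : ℕ) : EuclideanSpace ℝ (Fin d) := WithLp.toLp 2 (fun i : Fin d => (3:ℝ)^(i:ℕ))

theorem edgePoint_apply_ne {d : ℕ} (w x : EuclideanSpace ℝ (Fin d)) (i j : Fin d) (h : j ≠ i) :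
    edgePoint w x i j = x j := Function.update_of_ne h _ _

theorem edgePoint_apply_self {d : ℕ} (w x : EuclideanSpace ℝ (Fin d)) (i : Fin d) :
    edgePoint w x i i = edgeVal w x i := Function.update_self _ _ _

theorem inner_edgePoint {d : ℕ} (w x : EuclideanSpace ℝ (Fin d)) (i : Fin d) (hwi : w i ≠ 0) :
    ⟪w, edgePoint w x i⟫ = 0 := by
  rw [inner_sum']
  rw [← Finset.add_sum_erase _ _ (Finset.mem_univ i)]
  have h1 : edgePoint w x i i = edgeVal w x i := edgePoint_apply_self w x i
  have h2 : ∑ j ∈ Finset.univ.erase i, w j * edgePoint w x i j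
      = ∑ j ∈ Finset.univ.erase i, w j * x j := by
    apply Finset.sum_congr rfl
    intro j hj
    rw [edgePoint_apply_ne w x i j (Finset.mem_erase.mp hj).1]
  rw [h1, h2, edgeVal]
  field_simp
  ring

theorem core_count {d : ℕ} (u u' : EuclideanSpace ℝ (Fin d)) (idx : _ → Fin d)
    (hidx : ∀ x ∈ Set.extremePoints ℝ (cube d ∩ {y | ⟪u,y⟫ = 0}),
      u (idx x) ≠ 0 ∧ (∀ j, j ≠ idx x → x j = 1 ∨ x j = -1) ∧ u' (idx x) ≠ 0 ∧
        |edgeVal u' x (idx x)| < 1)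
    (q : EuclideanSpace ℝ (Fin d))
    (hq : q ∈ Set.extremePoints ℝ (cube d ∩ {y | ⟪u',y⟫ = 0}))
    (hqim : ∀ x ∈ Set.extremePoints ℝ (cube d ∩ {y | ⟪u,y⟫ = 0}), edgePoint u' x (idx x) ≠ q) :
    (Set.extremePoints ℝ (cube d ∩ {y | ⟪u,y⟫ = 0})).ncard <
      (Set.extremePoints ℝ (cube d ∩ {y | ⟪u',y⟫ = 0})).ncard := by
  classical
  set Eold := Set.extremePoints ℝ (cube d ∩ {y | ⟪u,y⟫ = 0}) with hEold
  set Enew := Set.extremePoints ℝ (cube d ∩ {y | ⟪u',y⟫ = 0}) with hEnew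
  set Φ : EuclideanSpace ℝ (Fin d) → EuclideanSpace ℝ (Fin d) :=
    fun x => edgePoint u' x (idx x) with hΦ
  have hmem : ∀ x ∈ Eold, Φ x ∈ Enew := by
    intro x hx
    obtain ⟨hui, hoff, hui', hlt⟩ := hidx x hx
    apply extreme_of_one_free u' (Φ x) ?_ ?_ (idx x)
    · intro j hj
      show edgePoint u' x (idx x) j = 1 ∨ edgePoint u' x (idx x) j = -1
      rw [edgePoint_apply_ne u' x (idx x) j hj]
      exact hoff j hj
    · exact hui'
    · -- cube membership
      intro i
      show |edgePoint u' x (idx x) i| ≤ 1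
      by_cases h : i = idx x
      · subst h
        rw [edgePoint_apply_self]
        exact le_of_lt hlt
      · rw [edgePoint_apply_ne u' x (idx x) i h]
        exact hx.1.1 i
    · exact inner_edgePoint u' x (idx x) hui'
  have hinj : Set.InjOn Φ Eold := by
    intro x hx y hy hxy
    obtain ⟨hui, hoff, hui', hlt⟩ := hidx x hx
    obtain ⟨hui2, hoff2, hui2', hlt2⟩ := hidx y hy
    by_cases hieq : idx x = idx y
    · refine coord_determined u x y (idx x) hui hx.1.2 hy.1.2 ?_
      intro j hj
      have h1 : Φ x j = x j := edgePoint_apply_ne u' x (idx x) j hj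
      have h2 : Φ y j = y j := edgePoint_apply_ne u' y (idx y) j (hieq ▸ hj)
      rw [← h1, ← h2, hxy]
    · exfalso
      have h1 : Φ x (idx y) = x (idx y) := edgePoint_apply_ne u' x (idx x) _ (fun h => hieq h.symm)
      have h2 : Φ y (idx y) = edgeVal u' y (idx y) := edgePoint_apply_self u' y (idx y)
      have h3 : x (idx y) = edgeVal u' y (idx y) := by rw [← h1, hxy, h2]
      rcases hoff (idx y) (fun h => hieq h.symm) with h | h <;> rw [h3] at h <;>
        rw [h] at hlt2 <;> simp at hlt2
  have hfin : Enew.Finite := extremePoints_finite u'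
  have hsub : insert q (Φ '' Eold) ⊆ Enew := by
    rintro p hp
    rcases Set.mem_insert_iff.mp hp with rfl | ⟨x, hx, rfl⟩
    · exact hq
    · exact hmem x hx
  have hqnot : q ∉ Φ '' Eold := by
    rintro ⟨x, hx, rfl⟩
    exact hqim x hx rfl
  calc Eold.ncard = (Φ '' Eold).ncard := (Set.ncard_image_of_injOn hinj).symm
    _ < (insert q (Φ '' Eold)).ncard := by
        rw [Set.ncard_insert_of_notMem hqnot (hfin.subset (fun p hp => hsub (Set.mem_insert_of_mem _ hp)))]
        omega
    _ ≤ Enew.ncard := Set.ncard_le_ncard hsub hfin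

theorem w3_inner_ne {d : ℕ} (hd : 0 < d) (z : EuclideanSpace ℝ (Fin d))
    (hz : z ∈ cubeVertices d) : ⟪w3 d, z⟫ ≠ 0 := by
  classical
  set n : ℤ := ∑ i : Fin d, (if z i = 1 then 1 else -1) * 3^(i:ℕ) with hn
  have hcast : ((n : ℤ) : ℝ) = ⟪w3 d, z⟫ := by
    rw [inner_sum', hn]
    push_cast
    apply Finset.sum_congr rfl
    intro i _
    rcases hz i with h | h
    · rw [h, if_pos rfl, w3]; push_cast; ring
    · rw [h, if_neg (by norm_num), w3]; push_cast; ring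
  set i0 : Fin d := ⟨0, hd⟩ with hi0
  have hsplit : n = (if z i0 = 1 then 1 else -1) * 3^(i0:ℕ) +
      ∑ i ∈ Finset.univ.erase i0, (if z i = 1 then 1 else -1) * 3^(i:ℕ) := by
    rw [hn, ← Finset.add_sum_erase _ _ (Finset.mem_univ i0)]
  have hdvd : (3:ℤ) ∣ ∑ i ∈ Finset.univ.erase i0, (if z i = 1 then 1 else -1) * 3^(i:ℕ) := by
    apply Finset.dvd_sum
    intro i hi
    have : (i:ℕ) ≠ 0 := by
      intro h
      exact (Finset.mem_erase.mp hi).1 (Fin.ext h)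
    obtain ⟨m, hm⟩ := Nat.exists_eq_succ_of_ne_zero this
    rw [hm, pow_succ]
    exact Dvd.dvd.mul_left (dvd_mul_left 3 (3^m)) _
  obtain ⟨m, hm⟩ := hdvd
  intro hcontra
  have : n = 0 := by
    have := hcast
    rw [hcontra] at this
    exact_mod_cast this
  rw [this] at hsplit
  have h3 : (3:ℤ)^(i0:ℕ) = 1 := by rw [hi0]; norm_num
  rw [h3, hm] at hsplit
  by_cases h : z i0 = 1 <;> simp [h] at hsplit <;> omega

theorem erase_sum {d : ℕ} (u x : EuclideanSpace ℝ (Fin d)) (i : Fin d) :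
    ∑ j ∈ Finset.univ.erase i, u j * x j = ⟪u,x⟫ - u i * x i := by
  rw [inner_sum', ← Finset.add_sum_erase _ (fun j => u j * x j) (Finset.mem_univ i)]
  ring

theorem edgeVal_formula {d : ℕ} (u w x : EuclideanSpace ℝ (Fin d)) (ε : ℝ) (i : Fin d) :
    edgeVal (u + ε • w) x i
      = -((⟪u,x⟫ - u i * x i) + ε * (⟪w,x⟫ - w i * x i)) / (u i + ε * w i) := by
  rw [edgeVal]
  have happ : ∀ j, (u + ε • w) j = u j + ε * w j := fun j => rfl
  have h1 : ∑ j ∈ Finset.univ.erase i, (u + ε • w) j * x j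
      = (∑ j ∈ Finset.univ.erase i, u j * x j) + ε * ∑ j ∈ Finset.univ.erase i, w j * x j := by
    rw [Finset.mul_sum, ← Finset.sum_add_distrib]
    apply Finset.sum_congr rfl
    intro j _
    rw [happ j]; ring
  rw [h1, erase_sum, erase_sum, happ i]

theorem ev_denom {d : ℕ} (u w : EuclideanSpace ℝ (Fin d)) (i : Fin d) (hui : u i ≠ 0) :
    ∀ᶠ ε in nhdsWithin (0:ℝ) (Set.Ioi 0), u i + ε * w i ≠ 0 := by
  have ht : Filter.Tendsto (fun ε : ℝ => u i + ε * w i) (nhdsWithin 0 (Set.Ioi 0)) (nhds (u i)) := by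
    have : Filter.Tendsto (fun ε : ℝ => u i + ε * w i) (nhds 0) (nhds (u i + 0 * w i)) := by
      apply Filter.Tendsto.add tendsto_const_nhds
      exact (continuous_id.mul continuous_const).tendsto 0
    simpa using this.mono_left nhdsWithin_le_nhds
  exact ht.eventually_ne hui

theorem ev_free {d : ℕ} (u w x : EuclideanSpace ℝ (Fin d)) (i : Fin d) (hui : u i ≠ 0)
    (hH : ⟪u,x⟫ = 0) (hx : |x i| < 1) :
    ∀ᶠ ε in nhdsWithin (0:ℝ) (Set.Ioi 0), |edgeVal (u + ε • w) x i| < 1 := by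
  have hf : ∀ ε : ℝ, edgeVal (u + ε • w) x i
      = -((⟪u,x⟫ - u i * x i) + ε * (⟪w,x⟫ - w i * x i)) / (u i + ε * w i) :=
    fun ε => edgeVal_formula u w x ε i
  have ht : Filter.Tendsto (fun ε : ℝ => edgeVal (u + ε • w) x i)
      (nhdsWithin 0 (Set.Ioi 0)) (nhds (x i)) := by
    have h1 : Filter.Tendsto
        (fun ε : ℝ => -((⟪u,x⟫ - u i * x i) + ε * (⟪w,x⟫ - w i * x i)) / (u i + ε * w i))
        (nhds 0) (nhds (x i)) := by
      have hnum : Filter.Tendsto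
          (fun ε : ℝ => -((⟪u,x⟫ - u i * x i) + ε * (⟪w,x⟫ - w i * x i)))
          (nhds 0) (nhds (u i * x i)) := by
        have h0 : Filter.Tendsto (fun ε : ℝ => (⟪u,x⟫ - u i * x i) + ε * (⟪w,x⟫ - w i * x i))
            (nhds 0) (nhds ((⟪u,x⟫ - u i * x i) + 0 * (⟪w,x⟫ - w i * x i))) :=
          Filter.Tendsto.add tendsto_const_nhds ((continuous_id.mul continuous_const).tendsto 0)
        have h1 := h0.neg
        have hval : -((⟪u,x⟫ - u i * x i) + 0 * (⟪w,x⟫ - w i * x i)) = u i * x i := by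
          rw [hH]; ring
        rwa [hval] at h1
      have hden : Filter.Tendsto (fun ε : ℝ => u i + ε * w i) (nhds 0) (nhds (u i)) := by
        have : Filter.Tendsto (fun ε : ℝ => u i + ε * w i) (nhds 0) (nhds (u i + 0 * w i)) :=
          Filter.Tendsto.add tendsto_const_nhds ((continuous_id.mul continuous_const).tendsto 0)
        simpa using this
      have hdiv := hnum.div hden hui
      have hval2 : u i * (x i / u i) = x i := by field_simp
      have hval3 : u i * x i / u i = x i := by field_simp
      first
        | (rwa [hval2] at hdiv)
        | (rwa [hval3] at hdiv)
    have h2 := h1.mono_left (nhdsWithin_le_nhds (s := Set.Ioi (0:ℝ)))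
    simpa only [← hf] using h2
  have : ∀ᶠ ε in nhdsWithin (0:ℝ) (Set.Ioi 0),
      edgeVal (u + ε • w) x i ∈ Set.Ioo (-1:ℝ) 1 := by
    apply ht.eventually
    apply Ioo_mem_nhds
    · rcases abs_lt.mp hx with ⟨h1, _⟩; exact h1
    · rcases abs_lt.mp hx with ⟨_, h2⟩; exact h2
  filter_upwards [this] with ε hε
  rw [abs_lt]; exact ⟨hε.1, hε.2⟩

theorem ev_vertex {d : ℕ} (u w z : EuclideanSpace ℝ (Fin d)) (i : Fin d) (hui : u i ≠ 0)
    (hzi : z i = 1 ∨ z i = -1) (hH : ⟪u,z⟫ = 0) (hsign : 0 < u i * z i * ⟪w,z⟫) :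
    ∀ᶠ ε in nhdsWithin (0:ℝ) (Set.Ioi 0), |edgeVal (u + ε • w) z i| < 1 := by
  have hden : Filter.Tendsto (fun ε : ℝ => u i + ε * w i) (nhds 0) (nhds (u i)) := by
    have : Filter.Tendsto (fun ε : ℝ => u i + ε * w i) (nhds 0) (nhds (u i + 0 * w i)) :=
      Filter.Tendsto.add tendsto_const_nhds ((continuous_id.mul continuous_const).tendsto 0)
    simpa using this
  set L : ℝ := z i * ⟪w,z⟫ / u i with hL
  have hLpos : 0 < L := by
    rw [hL]
    have h2 : z i * ⟪w,z⟫ / u i = (u i * z i * ⟪w,z⟫) / (u i)^2 := by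
      field_simp
    rw [h2]
    positivity
  have hh : Filter.Tendsto (fun ε : ℝ => z i * ⟪w,z⟫ / (u i + ε * w i)) (nhds 0) (nhds L) := by
    have := (tendsto_const_nhds (x := z i * ⟪w,z⟫) (f := nhds (0:ℝ))).div hden hui
    exact this
  have hgh : Filter.Tendsto (fun ε : ℝ => ε * (z i * ⟪w,z⟫ / (u i + ε * w i)))
      (nhds 0) (nhds 0) := by
    have := (continuous_id.tendsto (0:ℝ)).mul hh
    simpa using this
  have E1 : ∀ᶠ ε in nhdsWithin (0:ℝ) (Set.Ioi 0), 0 < z i * ⟪w,z⟫ / (u i + ε * w i) :=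
    (hh.mono_left nhdsWithin_le_nhds).eventually (eventually_gt_nhds hLpos)
  have E2 : ∀ᶠ ε in nhdsWithin (0:ℝ) (Set.Ioi 0),
      ε * (z i * ⟪w,z⟫ / (u i + ε * w i)) < 2 :=
    (hgh.mono_left nhdsWithin_le_nhds).eventually (eventually_lt_nhds (by norm_num : (0:ℝ) < 2))
  have E3 : ∀ᶠ ε in nhdsWithin (0:ℝ) (Set.Ioi 0), (0:ℝ) < ε :=
    eventually_mem_nhdsWithin
  have E4 := ev_denom u w i hui
  filter_upwards [E1, E2, E3, E4] with ε h1 h2 h3 h4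
  -- now pointwise computation
  rw [edgeVal_formula, hH]
  set D := u i + ε * w i with hD
  have hg : -((0 - u i * z i) + ε * (⟪w,z⟫ - w i * z i)) / D
      = z i - z i * (ε * (z i * ⟪w,z⟫ / D)) := by
    rcases hzi with h | h <;> rw [h] <;> field_simp <;> ring
  rw [hg]
  set G : ℝ := ε * (z i * ⟪w,z⟫ / D) with hGdef
  have hGpos : 0 < G := mul_pos h3 h1
  have hG2 : G < 2 := h2
  rcases hzi with h | h <;> rw [h] <;> rw [abs_lt] <;> constructor <;> linarith

theorem both_signs {d : ℕ} (u z : EuclideanSpace ℝ (Fin d)) (hu : u ≠ 0)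
    (hz : ∀ i, z i = 1 ∨ z i = -1) (hH : ⟪u,z⟫ = 0) :
    (∃ i, 0 < u i * z i) ∧ (∃ i, u i * z i < 0) := by
  obtain ⟨i0, hi0⟩ : ∃ i, u i ≠ 0 := by
    by_contra hc; push_neg at hc
    exact hu (by ext i; simpa using hc i)
  have hterm : u i0 * z i0 ≠ 0 := by
    rcases hz i0 with h | h <;> rw [h] <;> simpa using hi0
  have hsum : ∑ i, u i * z i = 0 := by rw [← inner_sum', hH]
  constructor
  · by_contra hc; push_neg at hc
    have := (Finset.sum_eq_zero_iff_of_nonpos (fun i _ => hc i)).mp hsum i0 (Finset.mem_univ i0)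
    exact hterm this
  · by_contra hc; push_neg at hc
    have := (Finset.sum_eq_zero_iff_of_nonneg (fun i _ => hc i)).mp hsum i0 (Finset.mem_univ i0)
    exact hterm this

theorem pigeon3 (p1 p2 p3 : ℝ) (h1 : p1 ≠ 0) (h2 : p2 ≠ 0) (h3 : p3 ≠ 0) :
    0 < p1*p2 ∨ 0 < p1*p3 ∨ 0 < p2*p3 := by
  rcases h1.lt_or_gt with a | a <;> rcases h2.lt_or_gt with b | b <;>
    rcases h3.lt_or_gt with c | c <;>
    first
      | (left; nlinarith)
      | (right; left; nlinarith)
      | (right; right; nlinarith)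

theorem exists_good_index {d : ℕ} (u w x : EuclideanSpace ℝ (Fin d)) (hu : u ≠ 0)
    (hx : x ∈ Set.extremePoints ℝ (cube d ∩ {y | ⟪u,y⟫ = 0}))
    (Hw : ∀ z ∈ cubeVertices d, ⟪w,z⟫ ≠ 0) :
    ∃ i, u i ≠ 0 ∧ (∀ j, j ≠ i → x j = 1 ∨ x j = -1) ∧
      (∀ᶠ ε in nhdsWithin (0:ℝ) (Set.Ioi 0),
        u i + ε * w i ≠ 0 ∧ |edgeVal (u + ε • w) x i| < 1) := by
  rcases structure_of_extreme u x hx with hvert | ⟨i, hui, hlt, hoff⟩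
  · -- vertex case
    have hxv : x ∈ cubeVertices d := hvert
    have hwx : ⟪w,x⟫ ≠ 0 := Hw x hxv
    obtain ⟨⟨ip, hip⟩, ⟨im, him⟩⟩ := both_signs u x hu hvert hx.1.2
    rcases hwx.lt_or_gt with hneg | hpos
    · refine ⟨im, ?_, fun j _ => hvert j, ?_⟩
      · intro h0; rw [h0] at him; simp at him
      · exact (ev_denom u w im (by intro h0; rw [h0] at him; simp at him)).and
          (ev_vertex u w x im (by intro h0; rw [h0] at him; simp at him) (hvert im) hx.1.2
            (by nlinarith))
    · refine ⟨ip, ?_, fun j _ => hvert j, ?_⟩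
      · intro h0; rw [h0] at hip; simp at hip
      · exact (ev_denom u w ip (by intro h0; rw [h0] at hip; simp at hip)).and
          (ev_vertex u w x ip (by intro h0; rw [h0] at hip; simp at hip) (hvert ip) hx.1.2
            (by nlinarith))
  · exact ⟨i, hui, hoff, (ev_denom u w i hui).and (ev_free u w x i hui hx.1.2 hlt)⟩

theorem key_step (d : ℕ) (hd : 3 ≤ d) (u : EuclideanSpace ℝ (Fin d)) (hu : u ≠ 0)
    (v : EuclideanSpace ℝ (Fin d)) (hv : v ∈ cubeVertices d) (hvH : ⟪u, v⟫ = 0) :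
    ∃ u' : EuclideanSpace ℝ (Fin d), u' ≠ 0 ∧
      (Set.extremePoints ℝ (cube d ∩ {y | ⟪u,y⟫ = 0})).ncard <
        (Set.extremePoints ℝ (cube d ∩ {y | ⟪u',y⟫ = 0})).ncard := by
  classical
  set F := nhdsWithin (0:ℝ) (Set.Ioi 0) with hF
  set Eold := Set.extremePoints ℝ (cube d ∩ {y | ⟪u,y⟫ = 0}) with hEold
  have hEfin : Eold.Finite := extremePoints_finite u
  have coord : ∀ (p q : EuclideanSpace ℝ (Fin d)), p = q → ∀ j, p j = q j := by
    intro p q h j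
    exact congrFun (congrArg (fun z : EuclideanSpace ℝ (Fin d) => (z : Fin d → ℝ)) h) j
  by_cases HA : ∃ i1 i2 i3 : Fin d, i1 ≠ i2 ∧ i1 ≠ i3 ∧ i2 ≠ i3 ∧ u i1 ≠ 0 ∧ u i2 ≠ 0 ∧ u i3 ≠ 0
  · -- CASE A
    obtain ⟨i1, i2, i3, h12, h13, h23, hu1, hu2, hu3⟩ := HA
    have hpm : ∀ i : Fin d, u i ≠ 0 → u i * v i ≠ 0 := by
      intro i hi
      rcases hv i with h | h <;> rw [h] <;> simpa using hi
    obtain ⟨z0, hz0v, hz0H, a, b, hab, hpa, hpb⟩ :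
        ∃ z0 : EuclideanSpace ℝ (Fin d), (∀ i, z0 i = 1 ∨ z0 i = -1) ∧ ⟪u,z0⟫ = 0 ∧
          ∃ a b : Fin d, a ≠ b ∧ 0 < u a * z0 a ∧ 0 < u b * z0 b := by
      have hneg : ∀ i, (-v : EuclideanSpace ℝ (Fin d)) i = -(v i) := fun i => rfl
      have hvneg : ∀ i, (-v : EuclideanSpace ℝ (Fin d)) i = 1 ∨
          (-v : EuclideanSpace ℝ (Fin d)) i = -1 := by
        intro i; rw [hneg]
        rcases hv i with h | h <;> rw [h] <;> norm_num
      have hHneg : ⟪u, (-v : EuclideanSpace ℝ (Fin d))⟫ = 0 := by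
        rw [inner_neg_right, hvH, neg_zero]
      have key : ∀ a b : Fin d, a ≠ b → 0 < (u a * v a) * (u b * v b) →
          ∃ z0 : EuclideanSpace ℝ (Fin d), (∀ i, z0 i = 1 ∨ z0 i = -1) ∧ ⟪u,z0⟫ = 0 ∧
            ∃ a b : Fin d, a ≠ b ∧ 0 < u a * z0 a ∧ 0 < u b * z0 b := by
        intro a b hab hprod
        rcases lt_or_ge 0 (u a * v a) with hpos | hle
        · have hbpos : 0 < u b * v b := by nlinarith
          exact ⟨v, hv, hvH, a, b, hab, hpos, hbpos⟩
        · have haneg : u a * v a < 0 :=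
            lt_of_le_of_ne hle (fun h => by rw [h, zero_mul] at hprod; exact lt_irrefl 0 hprod)
          have hbneg : u b * v b < 0 := by nlinarith
          refine ⟨-v, hvneg, hHneg, a, b, hab, ?_, ?_⟩
          · rw [hneg]; nlinarith
          · rw [hneg]; nlinarith
      rcases pigeon3 (u i1 * v i1) (u i2 * v i2) (u i3 * v i3)
        (hpm i1 hu1) (hpm i2 hu2) (hpm i3 hu3) with h | h | h
      · exact key i1 i2 h12 h
      · exact key i1 i3 h13 h
      · exact key i2 i3 h23 h
    have hua : u a ≠ 0 := fun h => by rw [h] at hpa; simp at hpa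
    have hub : u b ≠ 0 := fun h => by rw [h] at hpb; simp at hpb
    have hz0cv : z0 ∈ cubeVertices d := hz0v
    set w : EuclideanSpace ℝ (Fin d) :=
      if 0 < ⟪w3 d, z0⟫ then w3 d else -(w3 d) with hw
    have hwz0 : 0 < ⟪w, z0⟫ := by
      rcases (w3_inner_ne (by omega) z0 hz0cv).lt_or_gt with h | h
      · rw [hw, if_neg (by linarith), inner_neg_left]; linarith
      · rw [hw, if_pos h]; exact h
    have Hw : ∀ z ∈ cubeVertices d, ⟪w,z⟫ ≠ 0 := by
      intro z hz
      by_cases h : 0 < ⟪w3 d, z0⟫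
      · rw [hw, if_pos h]
        exact w3_inner_ne (by omega) z hz
      · rw [hw, if_neg h, inner_neg_left]
        simpa using w3_inner_ne (by omega) z hz
    have hz0cube : z0 ∈ cube d := by
      intro i; rcases hz0v i with h | h <;> rw [h] <;> norm_num
    have hz0E : z0 ∈ Eold :=
      extreme_of_one_free u z0 hz0cube hz0H a (fun j _ => hz0v j) hua
    have hchoice : ∀ x : EuclideanSpace ℝ (Fin d), ∃ i : Fin d, x ∈ Eold →
        (u i ≠ 0 ∧ (∀ j, j ≠ i → x j = 1 ∨ x j = -1) ∧
          (∀ᶠ ε in F, u i + ε * w i ≠ 0 ∧ |edgeVal (u + ε • w) x i| < 1)) := by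
      intro x
      by_cases hx : x ∈ Eold
      · obtain ⟨i, h⟩ := exists_good_index u w x hu hx Hw
        exact ⟨i, fun _ => h⟩
      · exact ⟨⟨0, by omega⟩, fun hc => absurd hc hx⟩
    choose idx hidx using hchoice
    -- second index at z0
    have hb'pack : ∃ b' : Fin d, b' ≠ idx z0 ∧ u b' ≠ 0 ∧ 0 < u b' * z0 b' := by
      by_cases h : idx z0 = a
      · exact ⟨b, by rw [h]; exact Ne.symm hab, hub, hpb⟩
      · exact ⟨a, fun hc => h hc.symm, hua, hpa⟩
    obtain ⟨b', hb'ne, hub', hpb'⟩ := hb'pack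
    have hev1 : ∀ᶠ ε in F, ∀ x ∈ Eold,
        (u (idx x) + ε * w (idx x) ≠ 0 ∧ |edgeVal (u + ε • w) x (idx x)| < 1) := by
      rw [Filter.eventually_all_finite hEfin]
      intro x hx
      exact (hidx x hx).2.2
    have hev2 : ∀ᶠ ε in F, u b' + ε * w b' ≠ 0 := ev_denom u w b' hub'
    have hev3 : ∀ᶠ ε in F, |edgeVal (u + ε • w) z0 b'| < 1 :=
      ev_vertex u w z0 b' hub' (hz0v b') hz0H (by nlinarith)
    have hev4 : ∀ᶠ ε in F, u a + ε * w a ≠ 0 := ev_denom u w a hua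
    obtain ⟨ε, hε1, hε2, hε3, hε4⟩ := (hev1.and (hev2.and (hev3.and hev4))).exists
    set u' : EuclideanSpace ℝ (Fin d) := u + ε • w with hu'
    refine ⟨u', ?_, ?_⟩
    · intro h0
      apply hε4
      have : u' a = (0 : EuclideanSpace ℝ (Fin d)) a := by rw [h0]
      simp at this; exact this
    · set q : EuclideanSpace ℝ (Fin d) := edgePoint u' z0 b' with hq
      apply core_count u u' idx ?_ q ?_ ?_
      · intro x hx
        obtain ⟨h1, h2, _⟩ := hidx x hx
        exact ⟨h1, h2, hε1 x hx⟩
      · apply extreme_of_one_free u' q ?_ ?_ b' ?_ ?_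
        · intro i
          by_cases h : i = b'
          · subst h; rw [hq, edgePoint_apply_self]
            exact le_of_lt hε3
          · rw [hq, edgePoint_apply_ne u' z0 b' i h]
            exact hz0cube i
        · exact inner_edgePoint u' z0 b' hε2
        · intro j hj
          rw [hq, edgePoint_apply_ne u' z0 b' j hj]
          exact hz0v j
        · exact hε2
      · intro x hx heq
        obtain ⟨hux, hoffx, _⟩ := hidx x hx
        by_cases hcase : idx x = b'
        · have hxz0 : x = z0 := by
            apply coord_determined u x z0 b' hub' hx.1.2 hz0H
            intro j hj
            have e1 : edgePoint u' x (idx x) j = x j :=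
              edgePoint_apply_ne u' x (idx x) j (by rw [hcase]; exact hj)
            have e2 : edgePoint u' z0 b' j = z0 j := edgePoint_apply_ne u' z0 b' j hj
            have := coord _ _ heq j
            rw [e1, hq, e2] at this
            exact this
          rw [hxz0] at hcase
          exact hb'ne hcase.symm
        · have e1 : edgePoint u' x (idx x) b' = x b' :=
            edgePoint_apply_ne u' x (idx x) b' (fun h => hcase h.symm)
          have e2 : q b' = edgeVal u' z0 b' := by
            rw [hq]; exact edgePoint_apply_self u' z0 b'
          have := coord _ _ heq b'
          rw [e1, e2] at this
          rcases hoffx b' (fun h => hcase h.symm) with h | h <;>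
            rw [this] at h <;> rw [h] at hε3 <;> norm_num at hε3
  · -- CASE B : u supported on exactly two coordinates
    obtain ⟨⟨ip, hip⟩, ⟨im, him⟩⟩ := both_signs u v hu hv hvH
    have hipne : u ip ≠ 0 := fun h => by rw [h] at hip; simp at hip
    have himne : u im ≠ 0 := fun h => by rw [h] at him; simp at him
    have hipim : ip ≠ im := by
      intro h; rw [h] at hip; linarith
    -- find a third coordinate k with u k = 0
    obtain ⟨k, hkip, hkim⟩ : ∃ k : Fin d, k ≠ ip ∧ k ≠ im := by
      by_contra hc; push_neg at hc
      have hsub : (Finset.univ : Finset (Fin d)) ⊆ {ip, im} := by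
        intro k _
        by_cases h : k = ip
        · simp [h]
        · simp [hc k h]
      have h1 : (Finset.univ : Finset (Fin d)).card ≤ 2 :=
        le_trans (Finset.card_le_card hsub) (Finset.card_insert_le _ _ |>.trans (by simp))
      rw [Finset.card_univ, Fintype.card_fin] at h1
      omega
    have huk : u k = 0 := by
      by_contra hk
      exact HA ⟨k, ip, im, hkip, hkim, hipim, hk, hipne, himne⟩
    set w : EuclideanSpace ℝ (Fin d) := EuclideanSpace.single k 1 with hw
    have hwap : ∀ j, w j = if j = k then 1 else 0 := by
      intro j; rw [hw]; exact EuclideanSpace.single_apply k 1 j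
    have hinnerw : ∀ z : EuclideanSpace ℝ (Fin d), ⟪w,z⟫ = z k := by
      intro z
      rw [inner_sum', Finset.sum_eq_single k]
      · rw [hwap k, if_pos rfl, one_mul]
      · intro j _ hj; rw [hwap j, if_neg hj, zero_mul]
      · intro h; exact absurd (Finset.mem_univ k) h
    have Hw : ∀ z ∈ cubeVertices d, ⟪w,z⟫ ≠ 0 := by
      intro z hz
      rw [hinnerw]
      rcases hz k with h | h <;> rw [h] <;> norm_num
    have hchoice : ∀ x : EuclideanSpace ℝ (Fin d), ∃ i : Fin d, x ∈ Eold →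
        (u i ≠ 0 ∧ (∀ j, j ≠ i → x j = 1 ∨ x j = -1) ∧
          (∀ᶠ ε in F, u i + ε * w i ≠ 0 ∧ |edgeVal (u + ε • w) x i| < 1)) := by
      intro x
      by_cases hx : x ∈ Eold
      · obtain ⟨i, h⟩ := exists_good_index u w x hu hx Hw
        exact ⟨i, fun _ => h⟩
      · exact ⟨⟨0, by omega⟩, fun hc => absurd hc hx⟩
    choose idx hidx using hchoice
    have hev1 : ∀ᶠ ε in F, ∀ x ∈ Eold,
        (u (idx x) + ε * w (idx x) ≠ 0 ∧ |edgeVal (u + ε • w) x (idx x)| < 1) := by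
      rw [Filter.eventually_all_finite hEfin]
      intro x hx
      exact (hidx x hx).2.2
    have hev0 : ∀ᶠ ε in F, (0:ℝ) < ε := eventually_mem_nhdsWithin
    obtain ⟨ε, hε1, hε0⟩ := (hev1.and hev0).exists
    set u' : EuclideanSpace ℝ (Fin d) := u + ε • w with hu'
    have hu'k : u' k = ε := by
      have : u' k = u k + ε * w k := rfl
      rw [this, huk, hwap k, if_pos rfl]; ring
    have hεne : u' k ≠ 0 := by rw [hu'k]; exact ne_of_gt hε0
    have hvcube : v ∈ cube d := by
      intro i; rcases hv i with h | h <;> rw [h] <;> norm_num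
    -- the new point: edge from v in direction k, crossing at coordinate 0
    have hval : edgeVal u' v k = 0 := by
      rw [edgeVal, erase_sum]
      have h1 : ⟪u', v⟫ = ε * v k := by
        rw [hu', inner_add_left, hvH, real_inner_smul_left, hinnerw]
        ring
      rw [h1, hu'k]
      ring_nf
    refine ⟨u', fun h0 => (by rw [h0] at hεne; exact hεne rfl : False), ?_⟩
    set q : EuclideanSpace ℝ (Fin d) := edgePoint u' v k with hq
    have hqk : q k = 0 := by rw [hq, edgePoint_apply_self, hval]
    apply core_count u u' idx ?_ q ?_ ?_
    · intro x hx
      obtain ⟨h1, h2, _⟩ := hidx x hx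
      exact ⟨h1, h2, hε1 x hx⟩
    · apply extreme_of_one_free u' q ?_ ?_ k ?_ ?_
      · intro i
        by_cases h : i = k
        · subst h; rw [hqk]; norm_num
        · rw [hq, edgePoint_apply_ne u' v k i h]
          exact hvcube i
      · exact inner_edgePoint u' v k hεne
      · intro j hj
        rw [hq, edgePoint_apply_ne u' v k j hj]
        exact hv j
      · exact hεne
    · intro x hx heq
      obtain ⟨hux, hoffx, _⟩ := hidx x hx
      have hxk : idx x ≠ k := fun h => hux (h ▸ huk)
      have e1 : edgePoint u' x (idx x) k = x k :=
        edgePoint_apply_ne u' x (idx x) k (fun h => hxk h.symm)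
      have := coord _ _ heq k
      rw [e1, hqk] at this
      rcases hoffx k (fun h => hxk h.symm) with h | h <;> rw [this] at h <;> norm_num at h

/-- A central slice of the cube `C_d` (with `d ≥ 3`) having the largest possible number of
vertices among all central slices of `C_d` is a generic central slice: its defining hyperplane
contains no vertex of `C_d`. -/
theorem max_vertex_central_slice_is_generic (d : ℕ) (hd : 3 ≤ d)
    (u : EuclideanSpace ℝ (Fin d)) (hu : u ≠ 0)
    (hdim : adim (cube d ∩ {x | ⟪u, x⟫ = 0}) = d - 1)
    (hmax : ∀ u' : EuclideanSpace ℝ (Fin d), u' ≠ 0 →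
      adim (cube d ∩ {x | ⟪u', x⟫ = 0}) = d - 1 →
      (Set.extremePoints ℝ (cube d ∩ {x | ⟪u', x⟫ = 0})).ncard ≤
        (Set.extremePoints ℝ (cube d ∩ {x | ⟪u, x⟫ = 0})).ncard) :
    ∀ v ∈ cubeVertices d, ⟪u, v⟫ ≠ 0 := by
  intro v hv
  by_contra h0
  obtain ⟨u', hu', hlt⟩ := key_step d hd u hu v hv h0
  have := hmax u' hu' (adim_slice d u' hu')
  omega
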